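/- Let d ≥ 1 and g > d. Then ℓ_θ(y) is finite for every y ∈ ℝ^d, there exists C such that ℓ_θ(y) ≤ C − log|y| for all |y| ≥ 2, and ∫_{ℝ^d} e^{g ℓ_θ(y)} dy < ∞. -/

import Mathlib

open MeasureTheory Filter

noncomputable section

abbrev Ed (d : ℕ) := EuclideanSpace ℝ (Fin d)

lemma aux_log_le_rpow {u : ℝ} (hu : 0 < u) : Real.log u ≤ 2 * u ^ ((2:ℝ)⁻¹) := by
  have h1 : (0:ℝ) < u ^ ((2:ℝ)⁻¹) := Real.rpow_pos_of_pos hu _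
  have h2 : Real.log (u ^ ((2:ℝ)⁻¹)) = (2:ℝ)⁻¹ * Real.log u := Real.log_rpow hu _
  nlinarith [Real.log_le_sub_one_of_pos h1]

lemma aux_maxlog_le {t : ℝ} (ht : 0 ≤ t) : max 0 (-Real.log t) ≤ 2 * t ^ (-(2:ℝ)⁻¹) := by
  rcases eq_or_lt_of_le ht with h | h
  · simp [← h, Real.log_zero, Real.zero_rpow (show (-(2:ℝ)⁻¹) ≠ 0 by norm_num)]
  · have h2 : (0:ℝ) ≤ 2 * t ^ (-(2:ℝ)⁻¹) := by positivity
    rw [max_le_iff]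
    refine ⟨h2, ?_⟩
    rw [← Real.log_inv]
    calc Real.log t⁻¹ ≤ 2 * (t⁻¹) ^ ((2:ℝ)⁻¹) := aux_log_le_rpow (inv_pos.2 h)
      _ = 2 * t ^ (-(2:ℝ)⁻¹) := by rw [Real.inv_rpow ht, ← Real.rpow_neg ht]

lemma aux_oneDim_integrable : Integrable (fun t : ℝ => max 0 (-Real.log |t|)) := by
  have hbase : IntegrableOn (fun t : ℝ => t ^ (-(2:ℝ)⁻¹)) (Set.Ioc 0 1) := by
    have h := intervalIntegral.intervalIntegrable_rpow' (r := -(2:ℝ)⁻¹)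
      (by norm_num) (a := 0) (b := 1)
    rwa [intervalIntegrable_iff_integrableOn_Ioc_of_le (by norm_num)] at h
  have hpos : IntegrableOn (fun t : ℝ => |t| ^ (-(2:ℝ)⁻¹)) (Set.Ioc 0 1) := by
    apply hbase.congr_fun ?_ measurableSet_Ioc
    intro t ht; simp only [abs_of_pos ht.1]
  have hneg : IntegrableOn (fun t : ℝ => |t| ^ (-(2:ℝ)⁻¹)) (Set.Ioc (-1) 0) := by
    have h := intervalIntegral.intervalIntegrable_rpow' (r := -(2:ℝ)⁻¹)
      (by norm_num) (a := 0) (b := 1)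
    have h2 := (IntervalIntegrable.iff_comp_neg).mp h
    have h3 := h2.symm
    rw [intervalIntegrable_iff_integrableOn_Ioc_of_le (by norm_num)] at h3
    simp only [neg_zero] at h3
    apply h3.congr_fun ?_ measurableSet_Ioc
    intro t ht
    simp only [abs_of_nonpos ht.2]
  have hIoc : IntegrableOn (fun t : ℝ => |t| ^ (-(2:ℝ)⁻¹)) (Set.Ioc (-1) 1) := by
    rw [← Set.Ioc_union_Ioc_eq_Ioc (by norm_num : (-1:ℝ) ≤ 0) (by norm_num : (0:ℝ) ≤ 1)]
    exact hneg.union hpos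
  have hIcc : IntegrableOn (fun t : ℝ => 2 * |t| ^ (-(2:ℝ)⁻¹)) (Set.Icc (-1) 1) := by
    rw [integrableOn_Icc_iff_integrableOn_Ioc]
    exact hIoc.const_mul 2
  have hsupp : Function.support (fun t : ℝ => max 0 (-Real.log |t|)) ⊆ Set.Icc (-1) 1 := by
    intro t ht
    simp only [Function.mem_support] at ht
    by_contra hmem
    apply ht
    have h1 : 1 ≤ |t| := by
      rcases lt_or_ge t 0 with h | h
      · rw [abs_of_neg h]
        by_contra hc; push_neg at hc
        exact hmem ⟨by linarith, by linarith⟩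
      · rw [abs_of_nonneg h]
        by_contra hc; push_neg at hc
        exact hmem ⟨by linarith, by linarith⟩
    have h2 : 0 ≤ Real.log |t| := Real.log_nonneg h1
    exact max_eq_left (neg_nonpos.mpr h2)
  rw [← integrableOn_iff_integrable_of_support_subset hsupp]
  apply Integrable.mono' hIcc
  · apply AEStronglyMeasurable.restrict
    exact (measurable_const.max (Real.measurable_log.comp measurable_norm).neg).aestronglyMeasurable
  · apply ae_of_all
    intro t
    rw [Real.norm_of_nonneg (le_max_left _ _)]
    exact aux_maxlog_le (abs_nonneg t)

lemma aux_coord_le_norm {d : ℕ} (x : Ed d) (i : Fin d) : |x i| ≤ ‖x‖ := by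
  rw [EuclideanSpace.norm_eq, ← Real.sqrt_sq_eq_abs]
  apply Real.sqrt_le_sqrt
  have := Finset.single_le_sum (f := fun j => ‖x j‖ ^ 2)
    (fun j _ => sq_nonneg _) (Finset.mem_univ i)
  simpa [Real.norm_eq_abs, sq_abs] using this

lemma aux_coord_zero_null {d : ℕ} (hd : 1 ≤ d) (i₀ : Fin d) :
    (volume : Measure (Ed d)) {x : Ed d | x i₀ = 0} = 0 := by
  let S : Submodule ℝ (Ed d) :=
    { carrier := {x : Ed d | x i₀ = 0}
      add_mem' := by
        intro a b ha hb
        simp only [Set.mem_setOf_eq] at *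
        simp [PiLp.add_apply, ha, hb]
      zero_mem' := by simp [Set.mem_setOf_eq]
      smul_mem' := by
        intro c a ha
        simp only [Set.mem_setOf_eq] at *
        simp [PiLp.smul_apply, ha] }
  have hS : S ≠ ⊤ := by
    intro h
    have : (EuclideanSpace.single i₀ (1:ℝ)) ∈ S := h ▸ Submodule.mem_top
    simp only [S, Submodule.mem_mk, AddSubmonoid.mem_mk, AddSubsemigroup.mem_mk,
      Set.mem_setOf_eq, EuclideanSpace.single_apply, if_pos rfl] at this
    exact (one_ne_zero (α := ℝ)) (by change (EuclideanSpace.single i₀ (1:ℝ)) i₀ = 0 at this; simpa using this)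
  exact Measure.addHaar_submodule volume S hS

lemma aux_psi_integrable (d : ℕ) (hd : 1 ≤ d) :
    Integrable (fun x : Ed d => max 0 (-Real.log ‖x‖)) := by
  classical
  set i₀ : Fin d := ⟨0, hd⟩
  set F : Fin d → ℝ → ℝ := fun i t =>
    if i = i₀ then max 0 (-Real.log |t|) else Set.indicator (Set.Icc (-1:ℝ) 1) 1 t with hF
  have hFint : ∀ i, Integrable (F i) := by
    intro i
    by_cases h : i = i₀
    · simpa [hF, h] using aux_oneDim_integrable
    · simp only [hF, if_neg h]
      rw [integrable_indicator_iff measurableSet_Icc]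
      exact (integrableOn_const_iff).mpr (Or.inr (by simp [Real.volume_Icc]))
  have hFnn : ∀ i t, 0 ≤ F i t := by
    intro i t
    by_cases h : i = i₀
    · simp [hF, h, le_max_left]
    · simp only [hF, if_neg h]
      exact Set.indicator_nonneg (fun _ _ => zero_le_one) t
  have hprod : Integrable (fun v : Fin d → ℝ => ∏ i, F i (v i)) :=
    Integrable.fin_nat_prod hFint
  have hP : Integrable (fun x : Ed d => ∏ i, F i (x i)) := by
    have he := EuclideanSpace.volume_preserving_symm_measurableEquiv_toLp (Fin d)
    have := (he.integrable_comp_emb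
      (MeasurableEquiv.measurableEmbedding _)).mpr hprod
    exact this
  have hnull : (volume : Measure (Ed d)) {x : Ed d | x i₀ = 0} = 0 :=
    aux_coord_zero_null hd i₀
  have hae : ∀ᵐ x : Ed d, x i₀ ≠ 0 := by
    rw [ae_iff]
    simpa using hnull
  apply Integrable.mono' hP
  · exact (measurable_const.max
      (Real.measurable_log.comp measurable_norm).neg).aestronglyMeasurable
  · filter_upwards [hae] with x hx
    rw [Real.norm_of_nonneg (le_max_left _ _)]
    rcases le_or_gt 1 ‖x‖ with h | h
    · have : 0 ≤ Real.log ‖x‖ := Real.log_nonneg h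
      rw [max_eq_left (neg_nonpos.mpr this)]
      exact Finset.prod_nonneg (fun i _ => hFnn i (x i))
    · have hall : ∀ i, |x i| ≤ 1 := fun i => (aux_coord_le_norm x i).trans h.le
      have hprod_eq : ∏ i, F i (x i) = max 0 (-Real.log |x i₀|) := by
        rw [Finset.prod_eq_single i₀]
        · simp [hF]
        · intro b _ hb
          simp only [hF, if_neg hb]
          rw [Set.indicator_of_mem]
          · rfl
          · exact Set.mem_Icc.mpr (abs_le.mp (hall b))
        · intro h'; exact absurd (Finset.mem_univ i₀) h'
      rw [hprod_eq]
      apply max_le_max le_rfl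
      apply neg_le_neg
      apply Real.log_le_log (abs_pos.mpr hx)
      exact aux_coord_le_norm x i₀

lemma aux_abs_log_le {r R : ℝ} (hr : 0 ≤ r) (hR : 0 ≤ R) (hrR : r ≤ R) :
    |Real.log r| ≤ Real.log (R + 1) + max 0 (-Real.log r) := by
  have hR1 : 0 ≤ Real.log (R + 1) := Real.log_nonneg (by linarith)
  have h1 : Real.log r ≤ Real.log (R + 1) := by
    rcases eq_or_lt_of_le hr with h | h
    · rw [← h, Real.log_zero]; exact hR1
    · exact Real.log_le_log h (by linarith)
  rcases abs_cases (Real.log r) with ⟨heq, _⟩ | ⟨heq, _⟩ <;> rw [heq] <;>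
    [linarith [le_max_left 0 (-Real.log r)]; linarith [le_max_right 0 (-Real.log r)]]

/-- `ℓ_θ(z) = ∫∫ log(1/|z + z₁ − z₂|) θ(z₁) θ(z₂) dz₁ dz₂`. -/
def elltheta (d : ℕ) (θ : Ed d → ℝ) (z : Ed d) : ℝ :=
  ∫ p : Ed d × Ed d, Real.log (1 / ‖z + p.1 - p.2‖) * θ p.1 * θ p.2

theorem statement15
    (d : ℕ) (hd : 1 ≤ d)
    (θ : Ed d → ℝ) (hθsmooth : ContDiff ℝ (⊤ : ℕ∞) θ) (hθnn : ∀ x, 0 ≤ θ x)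
    (hθsupp : tsupport θ ⊆ Metric.closedBall 0 1) (hθint : ∫ x : Ed d, θ x = 1)
    (g : ℝ) (hg : (d : ℝ) < g) :
    -- ℓ_θ(y) is finite for every y
    (∀ y : Ed d,
      Integrable (fun p : Ed d × Ed d => Real.log (1 / ‖y + p.1 - p.2‖) * θ p.1 * θ p.2)) ∧
    -- ℓ_θ(y) ≤ C − log|y| for |y| ≥ 2
    (∃ C : ℝ, ∀ y : Ed d, 2 ≤ ‖y‖ → elltheta d θ y ≤ C - Real.log ‖y‖) ∧
    -- ∫ e^{g ℓ_θ(y)} dy < ∞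
    Integrable (fun y : Ed d => Real.exp (g * elltheta d θ y)) := by
  classical
  have hg0 : (0:ℝ) < g := by
    have h1 : (1:ℝ) ≤ (d:ℝ) := by exact_mod_cast hd
    linarith
  set B : Set (Ed d) := Metric.closedBall 0 1 with hB
  have hθc : Continuous θ := hθsmooth.continuous
  have hθcs : HasCompactSupport θ :=
    IsCompact.of_isClosed_subset (isCompact_closedBall _ _) (isClosed_tsupport θ) hθsupp
  have hθInt : Integrable θ := hθc.integrable_of_hasCompactSupport hθcs
  obtain ⟨M, hM⟩ := hθcs.exists_bound_of_continuous hθc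
  have hMnn : 0 ≤ M := le_trans (norm_nonneg _) (hM 0)
  have hθle : ∀ x, θ x ≤ M := fun x =>
    (le_abs_self _).trans (by simpa [Real.norm_eq_abs] using hM x)
  set Ψ : Ed d → ℝ := fun x => max 0 (-Real.log ‖x‖) with hΨ
  have hΨint : Integrable Ψ := aux_psi_integrable d hd
  have hΨnn : ∀ x, 0 ≤ Ψ x := fun x => le_max_left _ _
  have hΨm : Measurable Ψ :=
    measurable_const.max (Real.measurable_log.comp measurable_norm).neg
  set I₀ : ℝ := ∫ x, Ψ x with hI₀
  have hI₀nn : 0 ≤ I₀ := integral_nonneg hΨnn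
  set χ : Ed d → ℝ := Set.indicator B 1 with hχ
  have hχint : Integrable χ := by
    rw [hχ, integrable_indicator_iff measurableSet_closedBall]
    exact (integrableOn_const_iff).mpr (Or.inr measure_closedBall_lt_top)
  have hχm : Measurable χ := measurable_const.indicator measurableSet_closedBall
  have hχnn : ∀ x, 0 ≤ χ x := fun x => Set.indicator_nonneg (fun _ _ => zero_le_one) x
  have hχone : ∀ x ∈ B, χ x = 1 := fun x hx => Set.indicator_of_mem hx 1
  -- the shear map is measure preserving
  have hT : ∀ y : Ed d, MeasurePreserving
      (fun p : Ed d × Ed d => (y + p.1 - p.2, p.2)) volume volume := by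
    intro y
    have h1 : MeasurePreserving (fun p : Ed d × Ed d => (p.1 - p.2, p.2))
        (volume : Measure (Ed d × Ed d)) volume := by
      have := measurePreserving_sub_prod (volume : Measure (Ed d)) (volume : Measure (Ed d))
      rwa [← Measure.volume_eq_prod] at this
    have h2 : MeasurePreserving (fun q : Ed d × Ed d => (y + q.1, q.2))
        (volume : Measure (Ed d × Ed d)) volume := by
      have := (measurePreserving_add_left (volume : Measure (Ed d)) y).prod
        (MeasurePreserving.id (volume : Measure (Ed d)))
      rwa [← Measure.volume_eq_prod] at this
    have h3 := h2.comp h1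
    have heq : ((fun q : Ed d × Ed d => (y + q.1, q.2)) ∘
        fun p : Ed d × Ed d => (p.1 - p.2, p.2))
        = fun p : Ed d × Ed d => (y + p.1 - p.2, p.2) := by
      funext p
      simp [Function.comp, add_sub_assoc]
    rwa [heq] at h3
  -- generic product structure helper
  have hcomp : ∀ (y : Ed d) (u v : Ed d → ℝ), Integrable u → Integrable v →
      Measurable u → Measurable v →
      Integrable (fun p : Ed d × Ed d => u (y + p.1 - p.2) * v p.2) ∧
      (∫ p : Ed d × Ed d, u (y + p.1 - p.2) * v p.2) = (∫ x, u x) * (∫ x, v x) := by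
    intro y u v hu hv hum hvm
    set G : Ed d × Ed d → ℝ := fun q => u q.1 * v q.2 with hG
    have hGm : AEStronglyMeasurable G (volume : Measure (Ed d × Ed d)) :=
      ((hum.comp measurable_fst).mul (hvm.comp measurable_snd)).aestronglyMeasurable
    have hGint : Integrable G := by
      rw [Measure.volume_eq_prod]
      exact hu.mul_prod hv
    have h1 : Integrable (G ∘ (fun p : Ed d × Ed d => (y + p.1 - p.2, p.2))) :=
      ((hT y).integrable_comp hGm).mpr hGint
    refine ⟨h1, ?_⟩
    have h2 : (∫ q, G q) = ∫ p : Ed d × Ed d, G (y + p.1 - p.2, p.2) := by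
      conv_lhs => rw [← (hT y).map_eq]
      exact integral_map (hT y).measurable.aemeasurable ((hT y).map_eq.symm ▸ hGm)
    have h3 : (∫ q, G q) = (∫ x, u x) * (∫ x, v x) := by
      rw [Measure.volume_eq_prod]
      exact integral_prod_mul u v
    exact h2.symm.trans h3
  -- Part 1 : integrability for every y
  have hfm : ∀ y : Ed d, Measurable
      (fun p : Ed d × Ed d => Real.log (1 / ‖y + p.1 - p.2‖) * θ p.1 * θ p.2) := by
    intro y
    have hc : Measurable (fun p : Ed d × Ed d => ‖y + p.1 - p.2‖) :=
      (((continuous_const.add continuous_fst).sub continuous_snd).norm).measurable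
    exact ((Real.measurable_log.comp (measurable_const.div hc)).mul
      (hθc.measurable.comp measurable_fst)).mul (hθc.measurable.comp measurable_snd)
  have hInt1 : ∀ y : Ed d, Integrable
      (fun p : Ed d × Ed d => Real.log (1 / ‖y + p.1 - p.2‖) * θ p.1 * θ p.2) := by
    intro y
    set A : ℝ := Real.log (‖y‖ + 3) with hA
    have hAnn : 0 ≤ A := Real.log_nonneg (by linarith [norm_nonneg y])
    set D : Ed d × Ed d → ℝ := fun p =>
      (M * M * A) * (χ p.1 * χ p.2) + (M * M) * (Ψ (y + p.1 - p.2) * χ p.2) with hD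
    have hDint : Integrable D := by
      apply Integrable.add
      · have hind : Integrable (fun p : Ed d × Ed d => χ p.1 * χ p.2) := by
          rw [Measure.volume_eq_prod]
          exact hχint.mul_prod hχint
        exact hind.const_mul _
      · exact ((hcomp y Ψ χ hΨint hχint hΨm hχm).1).const_mul _
    have hDnn : ∀ p, 0 ≤ D p := by
      intro p
      apply add_nonneg
      · exact mul_nonneg (by positivity) (mul_nonneg (hχnn _) (hχnn _))
      · exact mul_nonneg (by positivity) (mul_nonneg (hΨnn _) (hχnn _))
    apply hDint.mono' (hfm y).aestronglyMeasurable
    apply ae_of_all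
    intro p
    by_cases h1 : p.1 ∈ B
    · by_cases h2 : p.2 ∈ B
      · have hp1 : ‖p.1‖ ≤ 1 := mem_closedBall_zero_iff.mp h1
        have hp2 : ‖p.2‖ ≤ 1 := mem_closedBall_zero_iff.mp h2
        have hxx : ‖y + p.1 - p.2‖ ≤ ‖y‖ + 2 := by
          calc ‖y + p.1 - p.2‖ ≤ ‖y + p.1‖ + ‖p.2‖ := norm_sub_le _ _
            _ ≤ ‖y‖ + ‖p.1‖ + ‖p.2‖ := by linarith [norm_add_le y p.1]
            _ ≤ ‖y‖ + 2 := by linarith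
        have hL : |Real.log (1 / ‖y + p.1 - p.2‖)| ≤ A + Ψ (y + p.1 - p.2) := by
          rw [one_div, Real.log_inv, abs_neg]
          have h := aux_abs_log_le (norm_nonneg (y + p.1 - p.2))
            (by positivity : (0:ℝ) ≤ ‖y‖ + 2) hxx
          simpa [hA, hΨ, show ‖y‖ + 2 + 1 = ‖y‖ + 3 by ring] using h
        rw [Real.norm_eq_abs, abs_mul, abs_mul, abs_of_nonneg (hθnn p.1),
          abs_of_nonneg (hθnn p.2)]
        have hχ1 : χ p.1 = 1 := hχone _ h1
        have hχ2 : χ p.2 = 1 := hχone _ h2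
        simp only [hD, hχ1, hχ2, mul_one, one_mul]
        calc |Real.log (1 / ‖y + p.1 - p.2‖)| * θ p.1 * θ p.2
            ≤ (A + Ψ (y + p.1 - p.2)) * θ p.1 * θ p.2 := by
              apply mul_le_mul_of_nonneg_right
                (mul_le_mul_of_nonneg_right hL (hθnn _)) (hθnn _)
          _ ≤ (A + Ψ (y + p.1 - p.2)) * M * M := by
              have h4 : 0 ≤ A + Ψ (y + p.1 - p.2) := add_nonneg hAnn (hΨnn _)
              apply mul_le_mul (mul_le_mul_of_nonneg_left (hθle _) h4) (hθle _)
                (hθnn _) (by positivity)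
          _ = M * M * A + M * M * Ψ (y + p.1 - p.2) := by ring
      · have hz : θ p.2 = 0 :=
          image_eq_zero_of_notMem_tsupport (fun hmem => h2 (hθsupp hmem))
        simpa [hz] using hDnn p
    · have hz : θ p.1 = 0 :=
        image_eq_zero_of_notMem_tsupport (fun hmem => h1 (hθsupp hmem))
      simpa [hz] using hDnn p
  -- uniform upper bound
  have hUB : ∀ y : Ed d, elltheta d θ y ≤ M * I₀ := by
    intro y
    have hu := hcomp y Ψ (fun x => M * θ x) hΨint (hθInt.const_mul M) hΨm
      (hθc.measurable.const_mul M)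
    have hpt : ∀ p : Ed d × Ed d, Real.log (1 / ‖y + p.1 - p.2‖) * θ p.1 * θ p.2
        ≤ Ψ (y + p.1 - p.2) * (M * θ p.2) := by
      intro p
      have hL : Real.log (1 / ‖y + p.1 - p.2‖) ≤ Ψ (y + p.1 - p.2) := by
        rw [one_div, Real.log_inv]; exact le_max_right _ _
      calc Real.log (1 / ‖y + p.1 - p.2‖) * θ p.1 * θ p.2
          ≤ Ψ (y + p.1 - p.2) * θ p.1 * θ p.2 := by
            apply mul_le_mul_of_nonneg_right
              (mul_le_mul_of_nonneg_right hL (hθnn _)) (hθnn _)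
        _ ≤ Ψ (y + p.1 - p.2) * M * θ p.2 := by
            apply mul_le_mul_of_nonneg_right
              (mul_le_mul_of_nonneg_left (hθle _) (hΨnn _)) (hθnn _)
        _ = Ψ (y + p.1 - p.2) * (M * θ p.2) := by ring
    have hmono := integral_mono (hInt1 y) hu.1 hpt
    rw [hu.2] at hmono
    have heq : elltheta d θ y
        = ∫ p : Ed d × Ed d, Real.log (1 / ‖y + p.1 - p.2‖) * θ p.1 * θ p.2 := rfl
    rw [heq]
    have hval : (∫ x, M * θ x) = M := by rw [integral_const_mul _ _, hθint, mul_one]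
    rw [hval] at hmono
    linarith [hmono]
  -- bound for far away y
  have hFar : ∀ y : Ed d, 4 ≤ ‖y‖ → elltheta d θ y ≤ Real.log 2 - Real.log ‖y‖ := by
    intro y hy
    set c : ℝ := Real.log 2 - Real.log ‖y‖ with hc
    have hu : Integrable (fun p : Ed d × Ed d => c * (θ p.1 * θ p.2)) := by
      have hind : Integrable (fun p : Ed d × Ed d => θ p.1 * θ p.2) := by
        rw [Measure.volume_eq_prod]
        exact hθInt.mul_prod hθInt
      exact hind.const_mul c
    have hpt : ∀ p : Ed d × Ed d, Real.log (1 / ‖y + p.1 - p.2‖) * θ p.1 * θ p.2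
        ≤ c * (θ p.1 * θ p.2) := by
      intro p
      by_cases h1 : θ p.1 = 0
      · simp [h1]
      by_cases h2 : θ p.2 = 0
      · simp [h2]
      have hp1 : ‖p.1‖ ≤ 1 := mem_closedBall_zero_iff.mp
        (hθsupp (subset_tsupport θ (Function.mem_support.mpr h1)))
      have hp2 : ‖p.2‖ ≤ 1 := mem_closedBall_zero_iff.mp
        (hθsupp (subset_tsupport θ (Function.mem_support.mpr h2)))
      have h3 : ‖y‖ ≤ ‖y + p.1 - p.2‖ + 2 := by
        have e1 : y = (y + p.1 - p.2) + (p.2 - p.1) := by abel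
        calc ‖y‖ = ‖(y + p.1 - p.2) + (p.2 - p.1)‖ := by rw [← e1]
          _ ≤ ‖y + p.1 - p.2‖ + ‖p.2 - p.1‖ := norm_add_le _ _
          _ ≤ ‖y + p.1 - p.2‖ + 2 := by linarith [norm_sub_le p.2 p.1]
      have hxpos : (0:ℝ) < ‖y‖ / 2 := by linarith
      have h4 : ‖y‖ / 2 ≤ ‖y + p.1 - p.2‖ := by linarith
      have h5 : Real.log (1 / ‖y + p.1 - p.2‖) ≤ c := by
        rw [one_div, Real.log_inv, hc]
        have h6 := Real.log_le_log hxpos h4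
        rw [Real.log_div (by linarith : ‖y‖ ≠ 0) (by norm_num : (2:ℝ) ≠ 0)] at h6
        linarith
      calc Real.log (1 / ‖y + p.1 - p.2‖) * θ p.1 * θ p.2 ≤ c * θ p.1 * θ p.2 := by
            apply mul_le_mul_of_nonneg_right
              (mul_le_mul_of_nonneg_right h5 (hθnn _)) (hθnn _)
        _ = c * (θ p.1 * θ p.2) := by ring
    have hmono := integral_mono (hInt1 y) hu hpt
    have heval : (∫ p : Ed d × Ed d, c * (θ p.1 * θ p.2)) = c := by
      rw [integral_const_mul _ _]
      rw [Measure.volume_eq_prod, integral_prod_mul θ θ, hθint]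
      ring
    rw [heval] at hmono
    exact hmono
  refine ⟨hInt1, ⟨M * I₀ + Real.log 4, ?_⟩, ?_⟩
  · intro y hy
    rcases le_or_gt 4 ‖y‖ with h | h
    · have h1 := hFar y h
      have h2 : Real.log 2 ≤ Real.log 4 := Real.log_le_log (by norm_num) (by norm_num)
      have h3 : 0 ≤ M * I₀ := mul_nonneg hMnn hI₀nn
      linarith
    · have h1 := hUB y
      have h2 : Real.log ‖y‖ ≤ Real.log 4 := Real.log_le_log (by linarith) h.le
      linarith
  · -- Part 3
    have hFm : StronglyMeasurable (fun q : Ed d × (Ed d × Ed d) =>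
        Real.log (1 / ‖q.1 + q.2.1 - q.2.2‖) * θ q.2.1 * θ q.2.2) := by
      apply Measurable.stronglyMeasurable
      have hc : Measurable (fun q : Ed d × (Ed d × Ed d) => ‖q.1 + q.2.1 - q.2.2‖) :=
        ((measurable_fst.add (measurable_fst.comp measurable_snd)).sub
          (measurable_snd.comp measurable_snd)).norm
      exact ((Real.measurable_log.comp (measurable_const.div hc)).mul
        (hθc.measurable.comp (measurable_fst.comp measurable_snd))).mul
        (hθc.measurable.comp (measurable_snd.comp measurable_snd))
    have hlm : StronglyMeasurable (elltheta d θ) :=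
      MeasureTheory.StronglyMeasurable.integral_prod_right' (ν := volume) hFm
    set K : ℝ := Real.exp (g * (M * I₀)) * (5:ℝ) ^ g + (4:ℝ) ^ g with hK
    have hdom : Integrable (fun y : Ed d => K * (1 + ‖y‖) ^ (-g)) := by
      have hfin : (Module.finrank ℝ (Ed d) : ℝ) < g := by
        rw [finrank_euclideanSpace_fin]; exact hg
      exact (integrable_one_add_norm hfin).const_mul K
    apply hdom.mono'
    · exact (Real.measurable_exp.comp (hlm.measurable.const_mul g)).aestronglyMeasurable
    apply ae_of_all
    intro y
    rw [Real.norm_of_nonneg (Real.exp_pos _).le]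
    have h1y : (0:ℝ) < 1 + ‖y‖ := by linarith [norm_nonneg y]
    have hpow_nn : (0:ℝ) ≤ (1 + ‖y‖) ^ (-g) := Real.rpow_nonneg h1y.le _
    rcases le_or_gt ‖y‖ 4 with h | h
    · have hexp : Real.exp (g * elltheta d θ y) ≤ Real.exp (g * (M * I₀)) :=
        Real.exp_le_exp.mpr (mul_le_mul_of_nonneg_left (hUB y) hg0.le)
      have h5 : (5:ℝ) ^ (-g) ≤ (1 + ‖y‖) ^ (-g) :=
        Real.rpow_le_rpow_of_nonpos h1y (by linarith) (by linarith)
      have h5' : (1:ℝ) ≤ (5:ℝ) ^ g * (1 + ‖y‖) ^ (-g) := by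
        have e : (5:ℝ) ^ g * (5:ℝ) ^ (-g) = 1 := by
          rw [← Real.rpow_add (by norm_num)]; simp
        calc (1:ℝ) = (5:ℝ) ^ g * (5:ℝ) ^ (-g) := e.symm
          _ ≤ (5:ℝ) ^ g * (1 + ‖y‖) ^ (-g) :=
            mul_le_mul_of_nonneg_left h5 (Real.rpow_nonneg (by norm_num) g)
      calc Real.exp (g * elltheta d θ y) ≤ Real.exp (g * (M * I₀)) := hexp
        _ = Real.exp (g * (M * I₀)) * 1 := (mul_one _).symm
        _ ≤ Real.exp (g * (M * I₀)) * ((5:ℝ) ^ g * (1 + ‖y‖) ^ (-g)) :=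
            mul_le_mul_of_nonneg_left h5' (Real.exp_pos _).le
        _ = Real.exp (g * (M * I₀)) * (5:ℝ) ^ g * (1 + ‖y‖) ^ (-g) := by ring
        _ ≤ K * (1 + ‖y‖) ^ (-g) := by
            apply mul_le_mul_of_nonneg_right ?_ hpow_nn
            rw [hK]
            linarith [Real.rpow_nonneg (show (0:ℝ) ≤ 4 by norm_num) g]
    · have hy4 : (4:ℝ) ≤ ‖y‖ := h.le
      have hexp : Real.exp (g * elltheta d θ y)
          ≤ Real.exp (g * (Real.log 2 - Real.log ‖y‖)) :=
        Real.exp_le_exp.mpr (mul_le_mul_of_nonneg_left (hFar y hy4) hg0.le)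
      have hval : Real.exp (g * (Real.log 2 - Real.log ‖y‖)) = (2:ℝ) ^ g * ‖y‖ ^ (-g) := by
        rw [Real.rpow_def_of_pos (by norm_num : (0:ℝ) < 2),
          Real.rpow_def_of_pos (by linarith : (0:ℝ) < ‖y‖), ← Real.exp_add]
        congr 1
        ring
      have h2y : (1 + ‖y‖) ≤ 2 * ‖y‖ := by linarith
      have h3 : (2 * ‖y‖) ^ (-g) ≤ (1 + ‖y‖) ^ (-g) :=
        Real.rpow_le_rpow_of_nonpos h1y h2y (by linarith)
      have h4 : (2 * ‖y‖) ^ (-g) = (2:ℝ) ^ (-g) * ‖y‖ ^ (-g) :=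
        Real.mul_rpow (by norm_num) (by linarith)
      have h5 : (2:ℝ) ^ g * (2:ℝ) ^ (-g) = 1 := by
        rw [← Real.rpow_add (by norm_num)]; simp
      have hcmp : ‖y‖ ^ (-g) ≤ (2:ℝ) ^ g * (1 + ‖y‖) ^ (-g) := by
        calc ‖y‖ ^ (-g) = (2:ℝ) ^ g * ((2:ℝ) ^ (-g) * ‖y‖ ^ (-g)) := by
              rw [← mul_assoc, h5, one_mul]
          _ = (2:ℝ) ^ g * (2 * ‖y‖) ^ (-g) := by rw [h4]
          _ ≤ (2:ℝ) ^ g * (1 + ‖y‖) ^ (-g) :=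
              mul_le_mul_of_nonneg_left h3 (Real.rpow_nonneg (by norm_num) g)
      calc Real.exp (g * elltheta d θ y) ≤ (2:ℝ) ^ g * ‖y‖ ^ (-g) := by
            rw [← hval]; exact hexp
        _ ≤ (2:ℝ) ^ g * ((2:ℝ) ^ g * (1 + ‖y‖) ^ (-g)) :=
            mul_le_mul_of_nonneg_left hcmp (Real.rpow_nonneg (by norm_num) g)
        _ = ((2:ℝ) ^ g * (2:ℝ) ^ g) * (1 + ‖y‖) ^ (-g) := by ring
        _ ≤ K * (1 + ‖y‖) ^ (-g) := by
            apply mul_le_mul_of_nonneg_right ?_ hpow_nn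
            have h6 : (2:ℝ) ^ g * (2:ℝ) ^ g = (4:ℝ) ^ g := by
              rw [← Real.mul_rpow (by norm_num) (by norm_num)]; norm_num
            rw [h6, hK]
            have h7 : (0:ℝ) ≤ Real.exp (g * (M * I₀)) * (5:ℝ) ^ g :=
              mul_nonneg (Real.exp_pos _).le (Real.rpow_nonneg (by norm_num) g)
            linarith
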